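/- Fix w, v ∈ Sₙ, let v ↦ v' be the greedy operation associated to w, and let a ∈ ℝⁿ satisfy a_{v(1)} < a_{v(2)} < ⋯ < a_{v(n)}. Then for every 1 ≤ d ≤ n: (i) the increasing rearrangement of {v'(1),…,v'(d)} is componentwise at most the increasing rearrangement of {w(1),…,w(d)}, and (ii) for every d-element subset S ⊆ {1,…,n} whose increasing enumeration is componentwise at most the increasing rearrangement of {w(1),…,w(d)}, one has Σ_{k=1}^{d} a_{v'(k)} ≤ Σ_{s∈S} a_s. -/

import Mathlib

namespace SchubertToric

open Equiv

/-- The number of inversions (= the length `ℓ`) of a permutation. -/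
def invCount {n : ℕ} (w : Equiv.Perm (Fin n)) : ℕ :=
  ((Finset.univ : Finset (Fin n × Fin n)).filter fun p => p.1 < p.2 ∧ w p.2 < w p.1).card

/-- `initSeg w d` is the set `{w(1), …, w(d)}` (0-indexed: images of the first `d` indices). -/
def initSeg {n : ℕ} (w : Equiv.Perm (Fin n)) (d : ℕ) : Finset (Fin n) :=
  (Finset.univ.filter fun i : Fin n => (i : ℕ) < d).image w

/-- `domLE S T`: the increasing rearrangement of `S` is componentwise ≤ that of `T`. -/
def domLE {n : ℕ} (S T : Finset (Fin n)) : Prop :=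
  List.Forall₂ (· ≤ ·) (S.sort (· ≤ ·)) (T.sort (· ≤ ·))

/-- Bruhat order on `
Sₙ`, via the tableau criterion. -/
def bruhatLE {n : ℕ} (v w : Equiv.Perm (Fin n)) : Prop :=
  ∀ d : ℕ, domLE (initSeg v d) (initSeg w d)

/-- `GreedyRel w v vp` says that `vp = v'`, the result of the greedy operation associated
to `w`: there is a sequence of indices `idx 0, idx 1, …`, each chosen as the *least* index
not previously chosen such that the increasing rearrangement of the previously chosen values
together with the new value is componentwise at most `{w(1),…,w(d)}`, and `vp d = v (idx d)`. -/
def GreedyRel {n : ℕ} (w v vp : Equiv.Perm (Fin n)) : Prop :=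
  ∃ idx : Fin n → Fin n,
    (∀ d : Fin n, vp d = v (idx d)) ∧
    ∀ d : Fin n,
      IsLeast {i : Fin n |
        (∀ e : Fin n, e < d → idx e ≠ i) ∧
        domLE (insert (v i)
            ((Finset.univ.filter fun e : Fin n => e < d).image fun e => v (idx e)))
          (initSeg w ((d : ℕ) + 1))}
        (idx d)

/-- Right weak order: `rightWeakLE u v` iff `v = u·s_{i₁}⋯s_{i_k}` with
`ℓ(u·s_{i₁}⋯s_{i_j}) = ℓ(u) + j` for all `0 ≤ j ≤ k`. -/
def rightWeakLE {n : ℕ} (u v : Equiv.Perm (Fin n)) : Prop :=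
  ∃ L : List (Equiv.Perm (Fin n)),
    (∀ s ∈ L, ∃ (i : Fin n) (h : (i : ℕ) + 1 < n), s = Equiv.swap i ⟨(i : ℕ) + 1, h⟩) ∧
    v = u * L.prod ∧
    ∀ k ≤ L.length, invCount (u * (L.take k).prod) = invCount u + k

/-- `Ref(w) = {(w(i),w(j)) : i < j, ℓ(w) − ℓ(t_{w(i),w(j)}·w) = 1}`. -/
def RefSet {n : ℕ} (w : Equiv.Perm (Fin n)) : Set (Fin n × Fin n) :=
  {p | ∃ i j : Fin n, i < j ∧ p = (w i, w j) ∧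
    invCount (Equiv.swap (w i) (w j) * w) + 1 = invCount w}

/-- The (undirected) graph `Γ_w` on `Fin n` whose edges are the pairs in `Ref(w)`. -/
def refGraph {n : ℕ} (w : Equiv.Perm (Fin n)) : SimpleGraph (Fin n) :=
  SimpleGraph.fromRel fun a b => (a, b) ∈ RefSet w

/-- The vertices of `Γ_w`: the integers occurring in pairs of `Ref(w)`. -/
def refVerts {n : ℕ} (w : Equiv.Perm (Fin n)) : Set (Fin n) :=
  {a | ∃ b, (a, b) ∈ RefSet w ∨ (b, a) ∈ RefSet w}

/-- The cone `C(v) = {x ∈ ℝⁿ : x_{v(1)} ≤ x_{v(2)} ≤ ⋯ ≤ x_{v(n)}}`. -/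
def coneC {n : ℕ} (v : Equiv.Perm (Fin n)) : Set (Fin n → ℝ) :=
  {x | ∀ i j : Fin n, i ≤ j → x (v i) ≤ x (v j)}

/-- `Ẽ_w(u) = {(u(i),u(j)) : i < j, t_{u(i),u(j)}·u ≤ w, |ℓ(u) − ℓ(t_{u(i),u(j)}·u)| = 1}`. -/
def Etil {n : ℕ} (w u : Equiv.Perm (Fin n)) : Set (Fin n × Fin n) :=
  {p | ∃ i j : Fin n, i < j ∧ p = (u i, u j) ∧
    bruhatLE (Equiv.swap (u i) (u j) * u) w ∧
    (invCount (Equiv.swap (u i) (u j) * u) + 1 = invCount u ∨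
      invCount u + 1 = invCount (Equiv.swap (u i) (u j) * u))}

/-- An element `p = (a,b)` of `Ẽ_w(u)` is decomposable if it is a sum (under
`(a,b)+(b,c) = (a,c)`) of two or more other elements of `Ẽ_w(u)`. -/
def Decomposable {n : ℕ} (w u : Equiv.Perm (Fin n)) (p : Fin n × Fin n) : Prop :=
  ∃ (m : ℕ) (c : ℕ → Fin n), 2 ≤ m ∧ c 0 = p.1 ∧ c m = p.2 ∧
    ∀ i < m, (c i, c (i + 1)) ∈ Etil w u ∧ (c i, c (i + 1)) ≠ p

/-- `E_w(u)`: the indecomposable elements of `Ẽ_w(u)`. -/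
def Ew {n : ℕ} (w u : Equiv.Perm (Fin n)) : Set (Fin n × Fin n) :=
  {p | p ∈ Etil w u ∧ ¬ Decomposable w u p}

/-- The longest element `w₀ = n(n−1)⋯21` of `Sₙ`. -/
def w0 {n : ℕ} : Equiv.Perm (Fin n) :=
  Function.Involutive.toPerm Fin.rev Fin.rev_rev

/-!
Dominance `S ≼ T` between sets of the same size means `#{x ∈ T | x < m} ≤ #{x ∈ S | x < m}`
for every threshold `m`. In these terms dominance has an exchange property: if `P ≼ T` and
`S ≼ T ∪ {t}` with `t ∉ T`, some `y ∈ S \ P` satisfies both `P ∪ {y} ≼ T ∪ {t}` and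
`S \ {y} ≼ T`. Now induct on `d`. Exchanging `S ≼ {w(1),…,w(d)}` against
`P = {v'(1),…,v'(d-1)}` produces a `y` that is an admissible choice at step `d` of the greedy
algorithm, so `a_{v'(d)} ≤ a_y` by minimality of the greedy choice and monotonicity of `a ∘ v`,
while `S \ {y} ≼ {w(1),…,w(d-1)}` is handled by the induction hypothesis.
-/

open List in
theorem _root_.List.forall₂_le_iff_countP_lt {α : Type*} [LinearOrder α] {L M : List α}
    (hL : L.Pairwise (· ≤ ·)) (hM : M.Pairwise (· ≤ ·)) :
    Forall₂ (· ≤ ·) L M ↔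
      L.length = M.length ∧ ∀ m, M.countP (· < m) ≤ L.countP (· < m) := by
  constructor
  · intro h
    refine ⟨h.length_eq, fun m => ?_⟩
    clear hL hM
    induction h with
    | nil => rfl
    | @cons a b L M hab _ ih =>
      simp only [countP_cons]
      by_cases hbm : b < m
      · simp only [hbm, lt_of_le_of_lt hab hbm, decide_true]; omega
      · simp only [hbm, decide_false, Bool.false_eq_true, if_false, add_zero]
        exact ih.trans (Nat.le_add_right _ _)
  · induction L generalizing M with
    | nil => rintro ⟨hlen, -⟩; simp [eq_nil_of_length_eq_zero hlen.symm]
    | cons a L ih =>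
      obtain - | ⟨b, M⟩ := M
      · simp
      rintro ⟨hlen, hcount⟩
      obtain ⟨haL, hL⟩ := pairwise_cons.mp hL
      obtain ⟨hbM, hM⟩ := pairwise_cons.mp hM
      have hab : a ≤ b := by
        by_contra! hba
        have := hcount a
        have : L.countP (· < a) = 0 := countP_eq_zero.mpr fun x hx => by simpa using haL x hx
        simp_all
      refine .cons hab (ih hL hM ⟨by simpa using hlen, fun m => ?_⟩)
      have := hcount m
      simp only [countP_cons] at this
      by_cases hbm : b < m
      · simp only [hbm, lt_of_le_of_lt hab hbm, decide_true] at this; omega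
      · have : M.countP (· < m) = 0 :=
          countP_eq_zero.mpr fun x hx => by simpa using (hbm <| lt_of_le_of_lt (hbM x hx) ·)
        omega

section Dominance

open Finset

variable {n : ℕ}

-- Thresholds range over `ℕ` rather than `Fin n` so that `0` and `n` are available:
-- `countBelow S 0 = 0` and `countBelow S n = #S`.
def countBelow (S : Finset (Fin n)) (m : ℕ) : ℕ := #{x ∈ S | x.val < m}

lemma countP_sort_val_lt (S : Finset (Fin n)) (m : ℕ) :
    (S.sort (· ≤ ·)).countP (fun x => x.val < m) = countBelow S m := by
  rw [← Multiset.coe_countP, Finset.sort_eq, Multiset.countP_eq_card_filter]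
  rfl

theorem domLE_iff {S T : Finset (Fin n)} :
    domLE S T ↔ #S = #T ∧ ∀ m, countBelow T m ≤ countBelow S m := by
  have key := List.forall₂_le_iff_countP_lt (L := (S.sort (· ≤ ·)).map Fin.val)
    (M := (T.sort (· ≤ ·)).map Fin.val)
    (List.pairwise_map.mpr (S.pairwise_sort _)) (List.pairwise_map.mpr (T.pairwise_sort _))
  rw [List.forall₂_map_left_iff, List.forall₂_map_right_iff] at key
  simp only [List.length_map, Finset.length_sort, List.countP_map, Function.comp_def,
    countP_sort_val_lt, Fin.val_fin_le] at key
  exact key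

lemma countBelow_zero (S : Finset (Fin n)) : countBelow S 0 = 0 := by
  simp [countBelow]

lemma countBelow_of_le (S : Finset (Fin n)) {m : ℕ} (hm : n ≤ m) : countBelow S m = #S := by
  rw [countBelow, filter_true_of_mem fun x _ => x.isLt.trans_le hm]

lemma countBelow_insert {S : Finset (Fin n)} {y : Fin n} (hy : y ∉ S) (m : ℕ) :
    countBelow (insert y S) m = countBelow S m + if y.val < m then 1 else 0 := by
  rw [countBelow, countBelow, filter_insert]
  split_ifs <;> simp [card_insert_of_notMem, hy]

lemma card_filter_Ico_add_countBelow (S : Finset (Fin n)) {l u : ℕ} (h : l ≤ u) :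
    #{x ∈ S | l ≤ x.val ∧ x.val < u} + countBelow S l = countBelow S u := by
  rw [countBelow, countBelow, ← card_filter_add_card_filter_not (s := {x ∈ S | x.val < u})
    (fun x => l ≤ x.val), filter_filter, filter_filter]
  congr 2 <;> ext x <;> simp only [mem_filter] <;> grind

lemma domLE_insert_insert {P T : Finset (Fin n)} {t y : Fin n} (ht : t ∉ T) (hy : y ∉ P)
    (hP : domLE P T) (h : ∀ m, t.val < m → countBelow P m ≤ countBelow T m → y.val < m) :
    domLE (insert y P) (insert t T) := by
  rw [domLE_iff] at hP ⊢
  refine ⟨by rw [card_insert_of_notMem hy, card_insert_of_notMem ht, hP.1], fun m => ?_⟩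
  rw [countBelow_insert ht, countBelow_insert hy]
  have := hP.2 m
  have := h m
  split_ifs at * <;> omega

lemma domLE_erase {S T : Finset (Fin n)} {t y : Fin n} (ht : t ∉ T) (hy : y ∈ S)
    (hS : domLE S (insert t T)) (h : ∀ m ≤ t.val, countBelow S m ≤ countBelow T m → m ≤ y.val) :
    domLE (S.erase y) T := by
  rw [domLE_iff, card_insert_of_notMem ht] at hS
  refine domLE_iff.2 ⟨by rw [card_erase_of_mem hy, hS.1]; rfl, fun m => ?_⟩
  have hSm := hS.2 m
  rw [countBelow_insert ht] at hSm
  have := countBelow_insert (notMem_erase y S) m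
  rw [insert_erase hy] at this
  have := h m
  split_ifs at * <;> omega

theorem domLE_exchange {P S T : Finset (Fin n)} {t : Fin n} (ht : t ∉ T)
    (hP : domLE P T) (hS : domLE S (insert t T)) :
    ∃ y ∈ S, y ∉ P ∧ domLE (insert y P) (insert t T) ∧ domLE (S.erase y) T := by
  obtain ⟨hPcard, hPT⟩ := domLE_iff.1 hP
  obtain ⟨-, hST⟩ := domLE_iff.1 hS
  have hm : ∃ m, t.val < m ∧ countBelow P m ≤ countBelow T m :=
    ⟨n, t.isLt, by simp [countBelow_of_le _ le_rfl, hPcard]⟩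
  obtain ⟨m₀, ⟨ht₀, hP₀⟩, hm₀⟩ : ∃ m₀, (t.val < m₀ ∧ countBelow P m₀ ≤ countBelow T m₀) ∧
      ∀ m, t.val < m → countBelow P m ≤ countBelow T m → m₀ ≤ m :=
    ⟨Nat.find hm, Nat.find_spec hm, fun _ htm hPm => Nat.find_min' hm ⟨htm, hPm⟩⟩
  obtain ⟨m₁, hS₁, h₁t, hm₁⟩ : ∃ m₁, countBelow S m₁ ≤ countBelow T m₁ ∧ m₁ ≤ t.val ∧
      ∀ m ≤ t.val, countBelow S m ≤ countBelow T m → m ≤ m₁ :=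
    ⟨_, Nat.findGreatest_spec (P := fun m => countBelow S m ≤ countBelow T m) (m := 0)
      (Nat.zero_le _) (by simp [countBelow_zero]), Nat.findGreatest_le _,
      fun _ => Nat.le_findGreatest (P := fun m => countBelow S m ≤ countBelow T m)⟩
  -- Any `y ∈ S \ P` with `m₁ ≤ y < m₀` will do, and `S` has more elements than `P` there.
  obtain ⟨y, hyS, hyP⟩ : ∃ y ∈ {x ∈ S | m₁ ≤ x.val ∧ x.val < m₀},
      y ∉ {x ∈ P | m₁ ≤ x.val ∧ x.val < m₀} := by
    apply exists_mem_notMem_of_card_lt_card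
    have hS₀ := hST m₀
    have hP₁ := hPT m₁
    have := card_filter_Ico_add_countBelow S (h₁t.trans ht₀.le)
    have := card_filter_Ico_add_countBelow P (h₁t.trans ht₀.le)
    rw [countBelow_insert ht, if_pos ht₀] at hS₀
    omega
  rw [mem_filter] at hyS
  have hyP : y ∉ P := fun h => hyP (mem_filter.2 ⟨h, hyS.2⟩)
  exact ⟨y, hyS.1, hyP,
    domLE_insert_insert ht hyP hP fun m htm hPm => hyS.2.2.trans_le (hm₀ m htm hPm),
    domLE_erase ht hyS.1 hS fun m hmt hSm => (hm₁ m hmt hSm).trans hyS.2.1⟩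

lemma initSeg_zero (u : Perm (Fin n)) : initSeg u 0 = ∅ := by
  simp [initSeg]

lemma initSeg_succ (u : Perm (Fin n)) {k : ℕ} (hk : k < n) :
    initSeg u (k + 1) = insert (u ⟨k, hk⟩) (initSeg u k) := by
  rw [initSeg, initSeg, ← image_insert]
  congr 1
  ext i
  simp only [mem_filter, mem_univ, true_and, mem_insert, Fin.ext_iff]
  omega

lemma apply_notMem_initSeg (u : Perm (Fin n)) {k : ℕ} (hk : k < n) :
    u ⟨k, hk⟩ ∉ initSeg u k := by
  simp [initSeg]

lemma GreedyRel.isLeast {w v vp : Perm (Fin n)} (h : GreedyRel w v vp) (d : Fin n) :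
    IsLeast {i | v i ∉ initSeg vp d ∧ domLE (insert (v i) (initSeg vp d)) (initSeg w (d + 1))}
      (v.symm (vp d)) := by
  obtain ⟨idx, hvp, hleast⟩ := h
  have himage : ({e | e < d} : Finset (Fin n)).image (fun e => v (idx e)) = initSeg vp d := by
    simp only [initSeg, ← hvp]
    rfl
  have hfresh : ∀ i, (∀ e < d, idx e ≠ i) ↔ v i ∉ initSeg vp d := by
    simp only [initSeg, mem_image, mem_filter, mem_univ, true_and, hvp, v.injective.eq_iff,
      not_exists, not_and, ne_eq]
    exact fun i => Iff.rfl
  rw [hvp, symm_apply_apply]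
  simpa only [himage, hfresh] using hleast d

lemma GreedyRel.domLE_initSeg {w v vp : Perm (Fin n)} (h : GreedyRel w v vp) :
    ∀ k ≤ n, domLE (initSeg vp k) (initSeg w k)
  | 0, _ => by simp [domLE, initSeg_zero]
  | k + 1, hk => by
    have := (h.isLeast ⟨k, hk⟩).1.2
    rwa [apply_symm_apply, ← initSeg_succ] at this

theorem GreedyRel.sum_initSeg_le {M : Type*} [AddCommMonoid M] [PartialOrder M]
    [IsOrderedAddMonoid M] {w v vp : Perm (Fin n)} (h : GreedyRel w v vp) {a : Fin n → M}
    (ha : Monotone (a ∘ v)) :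
    ∀ k ≤ n, ∀ S, domLE S (initSeg w k) → ∑ x ∈ initSeg vp k, a x ≤ ∑ x ∈ S, a x := by
  intro k
  induction k with
  | zero =>
    intro _ S hS
    rw [initSeg_zero, domLE_iff, card_empty, card_eq_zero] at hS
    simp [hS.1, initSeg_zero]
  | succ k ih =>
    intro (hk : k < n) S hS
    rw [initSeg_succ w hk] at hS
    obtain ⟨y, hyS, hyP, hins, herase⟩ :=
      domLE_exchange (apply_notMem_initSeg w hk) (h.domLE_initSeg k hk.le) hS
    have hvp_le : a (vp ⟨k, hk⟩) ≤ a y := by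
      have : v.symm (vp ⟨k, hk⟩) ≤ v.symm y := (h.isLeast ⟨k, hk⟩).2
        (show v.symm y ∈ _ from ⟨by simpa using hyP, by simpa [initSeg_succ w hk] using hins⟩)
      simpa using ha this
    calc ∑ x ∈ initSeg vp (k + 1), a x = a (vp ⟨k, hk⟩) + ∑ x ∈ initSeg vp k, a x := by
          rw [initSeg_succ vp hk, sum_insert (apply_notMem_initSeg vp hk)]
      _ ≤ a y + ∑ x ∈ S.erase y, a x := add_le_add hvp_le (ih hk.le _ herase)
      _ = ∑ x ∈ S, a x := add_sum_erase S a hyS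

end Dominance

/-- If `a ∈ ℝⁿ` satisfies `a_{v(1)} < ⋯ < a_{v(n)}`, then for every `1 ≤ d ≤ n`:
(i) the increasing rearrangement of `{v'(1),…,v'(d)}` is componentwise at most that of
`{w(1),…,w(d)}`; and (ii) for every `d`-element subset `S` whose increasing enumeration is
componentwise at most that of `{w(1),…,w(d)}`, `Σ_{k≤d} a_{v'(k)} ≤ Σ_{s∈S} a_s`. -/
theorem greedy_min_sum {n : ℕ} (w v vp : Equiv.Perm (Fin n)) (h : GreedyRel w v vp)
    (a : Fin n → ℝ) (ha : ∀ i j : Fin n, i < j → a (v i) < a (v j)) :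
    ∀ d : ℕ, 0 < d → d ≤ n →
      domLE (initSeg vp d) (initSeg w d) ∧
      ∀ S : Finset (Fin n), S.card = d → domLE S (initSeg w d) →
        ∑ i ∈ Finset.univ.filter (fun i : Fin n => (i : ℕ) < d), a (vp i) ≤
          ∑ s ∈ S, a s := by
  intro d _ hd
  refine ⟨h.domLE_initSeg d hd, fun S _ hS => ?_⟩
  have hmono : Monotone (a ∘ v) := StrictMono.monotone fun i j hij => ha i j hij
  calc ∑ i ∈ Finset.univ.filter (fun i : Fin n => (i : ℕ) < d), a (vp i)
      = ∑ x ∈ initSeg vp d, a x := (Finset.sum_image fun _ _ _ _ hxy => vp.injective hxy).symm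
    _ ≤ ∑ s ∈ S, a s := h.sum_initSeg_le hmono d hd S hS
end SchubertToric
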